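/- Assume the nondegeneracy condition for the QVE Mx = a + b(x,x). Fix splittings b = b₁ + b₂ (b₁, b₂ bilinear, mapping pairs of nonnegative vectors to nonnegative vectors) and M = N − P (N an M-matrix, P ≥ 0), and set J(x) := N − b₁(·,x), g(x) := a + Px + b₂(x,x). Let x satisfy 0 ≤ x ≤ x* and F(x) ≤ 0, and let x' := J(x)⁻¹ g(x). Then for every vector y with x ≤ y ≤ x' and every vector g'' with g(x) ≤ g'' ≤ g(x'), the Gauss–Seidel-type update x^{GS} := J(y)⁻¹ g'' satisfies x' ≤ x^{GS} ≤ x*. -/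

import Mathlib

/-!
A matrix `A` is monotone when `A u ≥ 0` forces `u ≥ 0`. A nonsingular M-matrix `s • 1 - P` has
a nonnegative inverse: for `t > ρ(P)` the Neumann series `∑ Pᵏ / tᵏ⁺¹` converges by Gelfand's
formula, and `t ↓ s` by continuity of the inverse. A Z-matrix dominating a monotone matrix is
again monotone, so `J(z) ≥ F'_z` is monotone for `0 ≤ z ≤ x*`, `z ≠ x*`. The bounds then follow
by comparison: `J(y) x' ≤ J(x) x' = g(x) ≤ g''` and
`J(y) x* = g(x*) + b₁(x*, x* - y) ≥ g(x*) ≥ g(x') ≥ g''`.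
If `y = x*` then `x' = x*` and `J(x*) = J(x)`; if `x = x*` the update is `x'` itself.
-/

open Matrix Filter Topology

/-- The spectral radius of a real square matrix: the supremum of the norms of
its complex eigenvalues. -/
noncomputable def specRad {n : ℕ} (A : Matrix (Fin n) (Fin n) ℝ) : ℝ :=
  sSup {r : ℝ | ∃ μ ∈ spectrum ℂ (A.map (Complex.ofReal)), ‖μ‖ = r}

/-- An M-matrix: a matrix of the form `s • 1 - P` with `P ≥ 0` and `ρ(P) ≤ s`. -/
def IsMMat {n : ℕ} (A : Matrix (Fin n) (Fin n) ℝ) : Prop :=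
  ∃ (s : ℝ) (P : Matrix (Fin n) (Fin n) ℝ),
    (∀ i j, 0 ≤ P i j) ∧ specRad P ≤ s ∧ A = s • (1 : Matrix (Fin n) (Fin n) ℝ) - P

/-- A nonsingular M-matrix: an M-matrix that is invertible. -/
def IsNsMMat {n : ℕ} (A : Matrix (Fin n) (Fin n) ℝ) : Prop :=
  IsMMat A ∧ IsUnit A.det

section MonotoneMatrix

variable {ι : Type*} [Fintype ι]

def IsZMatrix (A : Matrix ι ι ℝ) : Prop := ∀ i j, i ≠ j → A i j ≤ 0

def IsMonotoneMatrix (A : Matrix ι ι ℝ) : Prop := ∀ u, 0 ≤ A *ᵥ u → 0 ≤ u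

lemma mulVec_nonneg_of_nonneg {A : Matrix ι ι ℝ} (hA : ∀ i j, 0 ≤ A i j) {v : ι → ℝ}
    (hv : 0 ≤ v) : 0 ≤ A *ᵥ v :=
  fun i => Finset.sum_nonneg fun j _ => mul_nonneg (hA i j) (hv j)

lemma IsZMatrix.mulVec_apply_nonpos {A : Matrix ι ι ℝ} (hA : IsZMatrix A) {w : ι → ℝ}
    (hw : 0 ≤ w) {i : ι} (hwi : w i = 0) : (A *ᵥ w) i ≤ 0 := by
  refine Finset.sum_nonpos fun j _ => ?_
  rcases eq_or_ne i j with rfl | hij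
  · simp [hwi]
  · exact mul_nonpos_of_nonpos_of_nonneg (hA i j hij) (hw j)

theorem IsZMatrix.isMonotoneMatrix_of_mulVec_pos {A : Matrix ι ι ℝ} (hA : IsZMatrix A)
    {v : ι → ℝ} (hv : 0 ≤ v) (hAv : ∀ i, 0 < (A *ᵥ v) i) : IsMonotoneMatrix A := by
  have hv_pos : ∀ i, 0 < v i := fun i =>
    (hv i).lt_of_ne fun h => (hAv i).not_ge (hA.mulVec_apply_nonpos hv h.symm)
  intro u hu
  by_contra hneg
  obtain ⟨j, hj⟩ : ∃ j, u j < 0 := by simpa [Pi.le_def] using hneg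
  have : Nonempty ι := ⟨j⟩
  -- with `t` the least ratio `u k / v k`, `u - t • v ≥ 0` vanishes at `i`, so row `i` of
  -- `A (u - t • v)` is `≤ 0`; but it is `(A u) i - t (A v) i > 0` as `t < 0`
  obtain ⟨i, -, hi⟩ := Finset.exists_min_image Finset.univ (fun k => u k / v k)
    Finset.univ_nonempty
  set t := u i / v i
  have ht : t < 0 := (hi j (Finset.mem_univ j)).trans_lt (div_neg_of_neg_of_pos hj (hv_pos j))
  have hw : 0 ≤ u - t • v := fun k => by
    have := (le_div_iff₀ (hv_pos k)).mp (hi k (Finset.mem_univ k))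
    simp only [Pi.zero_apply, Pi.sub_apply, Pi.smul_apply, smul_eq_mul]
    linarith
  have hwi : (u - t • v) i = 0 := by
    simp [t, div_mul_cancel₀ _ (hv_pos i).ne']
  have hrow := hA.mulVec_apply_nonpos hw hwi
  rw [mulVec_sub, mulVec_smul, Pi.sub_apply, Pi.smul_apply, smul_eq_mul] at hrow
  have hu_i : 0 ≤ (A *ᵥ u) i := hu i
  nlinarith [mul_neg_of_neg_of_pos ht (hAv i)]

variable [DecidableEq ι]

lemma IsMonotoneMatrix.isUnit_det {A : Matrix ι ι ℝ} (hA : IsMonotoneMatrix A) :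
    IsUnit A.det := by
  refine isUnit_iff_ne_zero.mpr fun hdet => ?_
  obtain ⟨v, hv, hAv⟩ := Matrix.exists_mulVec_eq_zero_iff.mpr hdet
  have h₁ : 0 ≤ v := hA v hAv.ge
  have h₂ : 0 ≤ -v := hA (-v) (by rw [mulVec_neg, hAv, neg_zero])
  exact hv (le_antisymm (neg_nonneg.mp h₂) h₁)

lemma IsMonotoneMatrix.le_inv_mulVec {A : Matrix ι ι ℝ} (hA : IsMonotoneMatrix A)
    {u w : ι → ℝ} (h : A *ᵥ u ≤ w) : u ≤ A⁻¹ *ᵥ w := by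
  refine sub_nonneg.mp (hA _ ?_)
  rw [mulVec_sub, mulVec_mulVec, mul_nonsing_inv _ hA.isUnit_det, one_mulVec]
  exact sub_nonneg.mpr h

lemma IsMonotoneMatrix.inv_mulVec_le {A : Matrix ι ι ℝ} (hA : IsMonotoneMatrix A)
    {u w : ι → ℝ} (h : w ≤ A *ᵥ u) : A⁻¹ *ᵥ w ≤ u := by
  refine sub_nonneg.mp (hA _ ?_)
  rw [mulVec_sub, mulVec_mulVec, mul_nonsing_inv _ hA.isUnit_det, one_mulVec]
  exact sub_nonneg.mpr h

lemma IsMonotoneMatrix.mulVec_inv_mulVec {A : Matrix ι ι ℝ} (hA : IsMonotoneMatrix A)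
    (w : ι → ℝ) : A *ᵥ (A⁻¹ *ᵥ w) = w := by
  rw [mulVec_mulVec, mul_nonsing_inv _ hA.isUnit_det, one_mulVec]

lemma isMonotoneMatrix_of_inv_nonneg {A : Matrix ι ι ℝ} (hdet : IsUnit A.det)
    (hinv : ∀ i j, 0 ≤ A⁻¹ i j) : IsMonotoneMatrix A := fun u hu => by
  simpa [mulVec_mulVec, nonsing_inv_mul _ hdet] using mulVec_nonneg_of_nonneg hinv hu

theorem IsMonotoneMatrix.of_le {A B : Matrix ι ι ℝ} (hA : IsMonotoneMatrix A)
    (hB : IsZMatrix B) (hAB : ∀ i j, A i j ≤ B i j) : IsMonotoneMatrix B := by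
  set v := A⁻¹ *ᵥ 1
  have hAv : A *ᵥ v = 1 := hA.mulVec_inv_mulVec 1
  have hv : 0 ≤ v := hA v (hAv ▸ zero_le_one)
  refine hB.isMonotoneMatrix_of_mulVec_pos hv fun i => ?_
  have hBA : 0 ≤ ((B - A) *ᵥ v) i :=
    mulVec_nonneg_of_nonneg (fun i j => sub_nonneg.mpr (hAB i j)) hv i
  have : (B *ᵥ v) i = 1 + ((B - A) *ᵥ v) i := by
    rw [sub_mulVec, hAv]; simp
  linarith

/-- Mathlib's `A⁻¹` is `0` when `A` is singular, so this holds for every `A`. -/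
lemma inv_mulVec_mulVec_le {A : Matrix ι ι ℝ} {u : ι → ℝ} (hu : 0 ≤ u) :
    A⁻¹ *ᵥ (A *ᵥ u) ≤ u := by
  by_cases h : IsUnit A.det
  · rw [mulVec_mulVec, nonsing_inv_mul _ h, one_mulVec]
  · rwa [nonsing_inv_apply_not_isUnit _ h, zero_mulVec]

end MonotoneMatrix

section SpectralRadius

attribute [local instance] Matrix.linftyOpNormedAddCommGroup Matrix.linftyOpNormedRing
  Matrix.linftyOpNormedAlgebra

variable {n : ℕ}

lemma specRad_nonneg (X : Matrix (Fin n) (Fin n) ℝ) : 0 ≤ specRad X :=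
  Real.sSup_nonneg fun _ ⟨μ, _, hμ⟩ => hμ ▸ norm_nonneg μ

lemma spectralRadius_map_ofReal_le (X : Matrix (Fin n) (Fin n) ℝ) :
    spectralRadius ℂ (X.map Complex.ofReal) ≤ ENNReal.ofReal (specRad X) := by
  have hbdd : BddAbove {r : ℝ | ∃ μ ∈ spectrum ℂ (X.map Complex.ofReal), ‖μ‖ = r} :=
    ((Matrix.finite_spectrum _).image (‖·‖)).bddAbove
  refine iSup₂_le fun μ hμ => ?_
  rw [← enorm_eq_nnnorm, ← ofReal_norm]
  exact ENNReal.ofReal_le_ofReal (le_csSup hbdd ⟨μ, hμ, rfl⟩)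

lemma nnnorm_map_ofReal (X : Matrix (Fin n) (Fin n) ℝ) : ‖X.map Complex.ofReal‖₊ = ‖X‖₊ := by
  simp [Matrix.linfty_opNNNorm_def, Complex.nnnorm_real]

lemma eventually_norm_pow_le_of_specRad_lt {X : Matrix (Fin n) (Fin n) ℝ} {r : ℝ}
    (hr : specRad X < r) : ∀ᶠ k : ℕ in atTop, ‖X ^ k‖ ≤ r ^ k := by
  have hr₀ : 0 < r := (specRad_nonneg X).trans_lt hr
  have hlt : spectralRadius ℂ (X.map Complex.ofReal) < ENNReal.ofReal r :=
    (spectralRadius_map_ofReal_le X).trans_lt ((ENNReal.ofReal_lt_ofReal_iff hr₀).mpr hr)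
  filter_upwards [(spectrum.pow_norm_pow_one_div_tendsto_nhds_spectralRadius
    (X.map Complex.ofReal)).eventually_lt_const hlt, eventually_gt_atTop 0] with k hk hk₀
  have hmap : X.map Complex.ofReal ^ k = (X ^ k).map Complex.ofReal :=
    (map_pow Complex.ofRealHom.mapMatrix X k).symm
  rw [ENNReal.ofReal_lt_ofReal_iff hr₀, hmap, ← coe_nnnorm, nnnorm_map_ofReal, coe_nnnorm,
    one_div, Real.rpow_inv_lt_iff_of_pos (norm_nonneg _) hr₀.le (by positivity)] at hk
  exact_mod_cast hk.le

lemma summable_pow_inv_smul_of_specRad_lt {X : Matrix (Fin n) (Fin n) ℝ} {t : ℝ}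
    (ht : specRad X < t) : Summable fun k : ℕ => (t⁻¹ • X) ^ k := by
  obtain ⟨r, hXr, hrt⟩ := exists_between ht
  have ht₀ : 0 < t := (specRad_nonneg X).trans_lt ht
  have hr₀ : 0 < r := (specRad_nonneg X).trans_lt hXr
  refine .of_norm_bounded_eventually_nat
    (summable_geometric_of_lt_one (by positivity) ((div_lt_one ht₀).mpr hrt)) ?_
  filter_upwards [eventually_norm_pow_le_of_specRad_lt hXr] with k hk
  rw [smul_pow, norm_smul, div_pow, norm_pow, norm_inv, Real.norm_of_nonneg ht₀.le,
    div_eq_inv_mul, inv_pow]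
  exact mul_le_mul_of_nonneg_left hk (by positivity)

lemma inv_nonneg_of_specRad_lt {P : Matrix (Fin n) (Fin n) ℝ} (hP : ∀ i j, 0 ≤ P i j) {t : ℝ}
    (ht : specRad P < t) : IsUnit (t • 1 - P).det ∧ ∀ i j, 0 ≤ (t • 1 - P)⁻¹ i j := by
  have ht₀ : 0 < t := (specRad_nonneg P).trans_lt ht
  have hsum := summable_pow_inv_smul_of_specRad_lt ht
  have hinv : (t • 1 - P) * (t⁻¹ • ∑' k, (t⁻¹ • P) ^ k) = 1 := by
    rw [mul_smul_comm, ← smul_mul_assoc, smul_sub, smul_smul, inv_mul_cancel₀ ht₀.ne', one_smul]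
    exact hsum.one_sub_mul_tsum_pow
  refine ⟨isUnit_det_of_right_inverse hinv, fun i j => ?_⟩
  have hentry := Pi.hasSum.mp (Pi.hasSum.mp hsum.hasSum i) j
  rw [inv_eq_right_inv hinv, Matrix.smul_apply, smul_eq_mul]
  exact mul_nonneg (inv_nonneg.mpr ht₀.le) (hentry.nonneg fun k =>
    Matrix.pow_apply_nonneg (fun i j => mul_nonneg (inv_nonneg.mpr ht₀.le) (hP i j)) k i j)

end SpectralRadius

theorem IsNsMMat.inv_nonneg {n : ℕ} {A : Matrix (Fin n) (Fin n) ℝ} (hA : IsNsMMat A)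
    (i j : Fin n) : 0 ≤ A⁻¹ i j := by
  obtain ⟨⟨s, P, hP, hPs, rfl⟩, hdet⟩ := hA
  have hshift : Tendsto (fun ε : ℝ => (s + ε) • (1 : Matrix (Fin n) (Fin n) ℝ) - P) (𝓝[>] 0)
      (𝓝 (s • 1 - P)) := by
    have hcont : Continuous fun ε : ℝ => (s + ε) • (1 : Matrix (Fin n) (Fin n) ℝ) - P := by
      fun_prop
    simpa using (hcont.tendsto 0).mono_left nhdsWithin_le_nhds
  have hinv := (continuousAt_matrix_inv _ ?_).tendsto.comp hshift
  · refine ge_of_tendsto ((hinv.apply_nhds i).apply_nhds j) ?_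
    filter_upwards [self_mem_nhdsWithin] with ε (hε : 0 < ε)
    exact (inv_nonneg_of_specRad_lt hP (by linarith)).2 i j
  · rw [Ring.inverse_eq_inv']
    exact continuousAt_inv₀ hdet.ne_zero

theorem IsNsMMat.isMonotoneMatrix {n : ℕ} {A : Matrix (Fin n) (Fin n) ℝ} (hA : IsNsMMat A) :
    IsMonotoneMatrix A :=
  isMonotoneMatrix_of_inv_nonneg hA.2 hA.inv_nonneg

theorem IsMMat.isZMatrix {n : ℕ} {A : Matrix (Fin n) (Fin n) ℝ} (hA : IsMMat A) :
    IsZMatrix A := by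
  obtain ⟨s, P, hP, -, rfl⟩ := hA
  intro i j hij
  simpa [one_apply_ne hij] using hP i j

lemma LinearMap.toMatrix'_apply_nonneg {ι : Type*} [Fintype ι] [DecidableEq ι]
    {f : (ι → ℝ) →ₗ[ℝ] ι → ℝ} (hf : ∀ v, 0 ≤ v → 0 ≤ f v) (i j : ι) :
    0 ≤ LinearMap.toMatrix' f i j := by
  rw [LinearMap.toMatrix'_apply]
  exact hf _ (Pi.single_nonneg.mpr zero_le_one) i

lemma LinearMap.flip_eq_zero_of_apply_pos_eq_zero {ι : Type*} [Fintype ι]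
    {b : (ι → ℝ) →ₗ[ℝ] (ι → ℝ) →ₗ[ℝ] ι → ℝ} (hb : ∀ u v, 0 ≤ u → 0 ≤ v → 0 ≤ b u v)
    {p w : ι → ℝ} (hp : ∀ i, 0 < p i) (hw : 0 ≤ w) (h : b p w = 0) : b.flip w = 0 := by
  -- a nonnegative `u` lies below `c • p`, so `0 ≤ b u w ≤ c • b p w = 0`
  have hnonneg : ∀ u, 0 ≤ u → b u w = 0 := by
    intro u hu
    set c := ∑ i, u i / p i
    have huc : u ≤ c • p := fun k => by
      have : u k / p k ≤ c :=
        Finset.single_le_sum (f := fun i => u i / p i) (fun i _ => div_nonneg (hu i) (hp i).le)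
          (Finset.mem_univ k)
      simpa [div_le_iff₀ (hp k)] using this
    have hle := hb _ _ (sub_nonneg.mpr huc) hw
    rw [map_sub, map_smul, LinearMap.sub_apply, LinearMap.smul_apply, h, smul_zero,
      zero_sub, neg_nonneg] at hle
    exact le_antisymm hle (hb u w hu hw)
  ext u : 1
  rw [LinearMap.flip_apply, LinearMap.zero_apply, ← posPart_sub_negPart u, map_sub,
    LinearMap.sub_apply, hnonneg _ (posPart_nonneg u), hnonneg _ (negPart_nonneg u), sub_zero]

namespace QVE

variable {n : ℕ} {M N P : Matrix (Fin n) (Fin n) ℝ} {a : Fin n → ℝ}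
  {b b₁ b₂ : (Fin n → ℝ) →ₗ[ℝ] (Fin n → ℝ) →ₗ[ℝ] (Fin n → ℝ)}

def J (N : Matrix (Fin n) (Fin n) ℝ) (b₁ : (Fin n → ℝ) →ₗ[ℝ] (Fin n → ℝ) →ₗ[ℝ] (Fin n → ℝ))
    (z : Fin n → ℝ) : Matrix (Fin n) (Fin n) ℝ :=
  N - LinearMap.toMatrix' (b₁.flip z)

def g (a : Fin n → ℝ) (P : Matrix (Fin n) (Fin n) ℝ)
    (b₂ : (Fin n → ℝ) →ₗ[ℝ] (Fin n → ℝ) →ₗ[ℝ] (Fin n → ℝ)) (z : Fin n → ℝ) : Fin n → ℝ :=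
  a + P *ᵥ z + b₂ z z

lemma J_mulVec (z w : Fin n → ℝ) : J N b₁ z *ᵥ w = N *ᵥ w - b₁ w z := by
  rw [J, sub_mulVec, LinearMap.toMatrix'_mulVec, LinearMap.flip_apply]

lemma J_mulVec_eq_sub (x y w : Fin n → ℝ) :
    J N b₁ y *ᵥ w = J N b₁ x *ᵥ w - b₁ w (y - x) := by
  rw [J_mulVec, J_mulVec, map_sub]
  abel

lemma g_sub_J_mulVec_self (hM : M = N - P) (hb : b = b₁ + b₂) (x : Fin n → ℝ) :
    g a P b₂ x - J N b₁ x *ᵥ x = a + b x x - M *ᵥ x := by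
  subst hM hb
  rw [J_mulVec, g, sub_mulVec, LinearMap.add_apply, LinearMap.add_apply]
  abel

lemma J_mulVec_self_le_g (hM : M = N - P) (hb : b = b₁ + b₂) {x : Fin n → ℝ}
    (hx : M *ᵥ x ≤ a + b x x) : J N b₁ x *ᵥ x ≤ g a P b₂ x :=
  sub_nonneg.mp ((g_sub_J_mulVec_self hM hb x).symm ▸ sub_nonneg.mpr hx)

lemma J_mulVec_self_eq_g (hM : M = N - P) (hb : b = b₁ + b₂) {x : Fin n → ℝ}
    (hx : M *ᵥ x = a + b x x) : J N b₁ x *ᵥ x = g a P b₂ x :=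
  (sub_eq_zero.mp ((g_sub_J_mulVec_self hM hb x).trans (sub_eq_zero.mpr hx.symm))).symm

lemma g_mono (hP : ∀ i j, 0 ≤ P i j) (hb₂ : ∀ u v, 0 ≤ u → 0 ≤ v → 0 ≤ b₂ u v)
    {u v : Fin n → ℝ} (hu : 0 ≤ u) (huv : u ≤ v) : g a P b₂ u ≤ g a P b₂ v := by
  have hvu : 0 ≤ v - u := sub_nonneg.mpr huv
  have hdiff : g a P b₂ v - g a P b₂ u = P *ᵥ (v - u) + b₂ (v - u) v + b₂ u (v - u) := by
    simp only [g, mulVec_sub, map_sub, LinearMap.sub_apply]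
    abel
  refine sub_nonneg.mp (hdiff ▸ add_nonneg (add_nonneg ?_ ?_) ?_)
  · exact mulVec_nonneg_of_nonneg hP hvu
  · exact hb₂ _ _ hvu (hu.trans huv)
  · exact hb₂ _ _ hu hvu

lemma J_mulVec_solution (hM : M = N - P) (hb : b = b₁ + b₂) {xs : Fin n → ℝ}
    (hxs : M *ᵥ xs = a + b xs xs) (z : Fin n → ℝ) :
    J N b₁ z *ᵥ xs = g a P b₂ xs + b₁ xs (xs - z) := by
  rw [J_mulVec_eq_sub xs z, J_mulVec_self_eq_g hM hb hxs, sub_eq_add_neg, ← map_neg, neg_sub]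

lemma isMonotoneMatrix_J (hM : M = N - P) (hb : b = b₁ + b₂) (hN : IsMMat N)
    (hP : ∀ i j, 0 ≤ P i j) (hb₀ : ∀ u v, 0 ≤ u → 0 ≤ v → 0 ≤ b u v)
    (hb₁ : ∀ u v, 0 ≤ u → 0 ≤ v → 0 ≤ b₁ u v) (hb₂ : ∀ u v, 0 ≤ u → 0 ≤ v → 0 ≤ b₂ u v)
    {z : Fin n → ℝ} (hz : 0 ≤ z)
    (hF : IsNsMMat (M - LinearMap.toMatrix' (b z) - LinearMap.toMatrix' (b.flip z))) :
    IsMonotoneMatrix (J N b₁ z) := by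
  have hflip : ∀ (c : (Fin n → ℝ) →ₗ[ℝ] (Fin n → ℝ) →ₗ[ℝ] (Fin n → ℝ)),
      (∀ u v, 0 ≤ u → 0 ≤ v → 0 ≤ c u v) → ∀ i j, 0 ≤ LinearMap.toMatrix' (c.flip z) i j :=
    fun c hc => LinearMap.toMatrix'_apply_nonneg fun v hv => hc v z hv hz
  refine hF.isMonotoneMatrix.of_le (fun i j hij => ?_) (fun i j => ?_)
  · have := hN.isZMatrix i j hij
    have := hflip b₁ hb₁ i j
    simp only [J, Matrix.sub_apply]
    linarith
  · have := hP i j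
    have := LinearMap.toMatrix'_apply_nonneg (fun v hv => hb₀ z v hz hv) i j
    have := hflip b₂ hb₂ i j
    have hsum : (b₁ + b₂).flip z = b₁.flip z + b₂.flip z := rfl
    subst hM hb
    simp only [J, hsum, map_add, Matrix.sub_apply, Matrix.add_apply]
    linarith

lemma J_eq_of_J_mulVec_eq_g (hM : M = N - P) (hb : b = b₁ + b₂) (hP : ∀ i j, 0 ≤ P i j)
    (hb₁ : ∀ u v, 0 ≤ u → 0 ≤ v → 0 ≤ b₁ u v) (hb₂ : ∀ u v, 0 ≤ u → 0 ≤ v → 0 ≤ b₂ u v)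
    {x xs : Fin n → ℝ} (hxs : M *ᵥ xs = a + b xs xs) (hxs_pos : ∀ i, 0 < xs i) (hx : 0 ≤ x)
    (hx_le : x ≤ xs) (h : J N b₁ x *ᵥ xs = g a P b₂ x) : J N b₁ xs = J N b₁ x := by
  have hw : 0 ≤ xs - x := sub_nonneg.mpr hx_le
  have hsplit := J_mulVec_solution hM hb hxs x
  rw [h] at hsplit
  have hzero : b₁ xs (xs - x) = 0 := by
    refine le_antisymm ?_ (hb₁ _ _ (fun i => (hxs_pos i).le) hw)
    have := g_mono hP hb₂ hx hx_le (a := a)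
    rw [hsplit] at this
    simpa using this
  rw [J, J, ← add_sub_cancel x xs, map_add,
    LinearMap.flip_eq_zero_of_apply_pos_eq_zero hb₁ hxs_pos hw hzero, add_zero]

lemma g_le_J_mulVec_solution (hM : M = N - P) (hb : b = b₁ + b₂)
    (hb₁ : ∀ u v, 0 ≤ u → 0 ≤ v → 0 ≤ b₁ u v) {xs : Fin n → ℝ} (hxs : M *ᵥ xs = a + b xs xs)
    (hxs₀ : 0 ≤ xs) {z : Fin n → ℝ} (hz : z ≤ xs) : g a P b₂ xs ≤ J N b₁ z *ᵥ xs := by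
  rw [J_mulVec_solution hM hb hxs]
  exact le_add_of_nonneg_right (hb₁ _ _ hxs₀ (sub_nonneg.mpr hz))

lemma J_inv_mulVec_g_mem_Icc (hM : M = N - P) (hb : b = b₁ + b₂) (hP : ∀ i j, 0 ≤ P i j)
    (hb₁ : ∀ u v, 0 ≤ u → 0 ≤ v → 0 ≤ b₁ u v) (hb₂ : ∀ u v, 0 ≤ u → 0 ≤ v → 0 ≤ b₂ u v)
    {x xs : Fin n → ℝ} (hJx : IsMonotoneMatrix (J N b₁ x)) (hxs : M *ᵥ xs = a + b xs xs)
    (hxs₀ : 0 ≤ xs) (hx : 0 ≤ x) (hx_le : x ≤ xs) (hF : M *ᵥ x ≤ a + b x x) :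
    (J N b₁ x)⁻¹ *ᵥ g a P b₂ x ∈ Set.Icc x xs :=
  ⟨hJx.le_inv_mulVec (J_mulVec_self_le_g hM hb hF), hJx.inv_mulVec_le
    ((g_mono hP hb₂ hx hx_le).trans (g_le_J_mulVec_solution hM hb hb₁ hxs hxs₀ hx_le))⟩

lemma J_inv_mulVec_mem_Icc (hM : M = N - P) (hb : b = b₁ + b₂) (hP : ∀ i j, 0 ≤ P i j)
    (hb₁ : ∀ u v, 0 ≤ u → 0 ≤ v → 0 ≤ b₁ u v) (hb₂ : ∀ u v, 0 ≤ u → 0 ≤ v → 0 ≤ b₂ u v)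
    {x x' y xs g'' : Fin n → ℝ} (hJy : IsMonotoneMatrix (J N b₁ y))
    (hxs : M *ᵥ xs = a + b xs xs) (hxs₀ : 0 ≤ xs) (hx : 0 ≤ x)
    (hJx_x' : J N b₁ x *ᵥ x' = g a P b₂ x) (hx'_mem : x' ∈ Set.Icc x xs)
    (hy₁ : x ≤ y) (hy₂ : y ≤ x') (hg''₁ : g a P b₂ x ≤ g'') (hg''₂ : g'' ≤ g a P b₂ x') :
    (J N b₁ y)⁻¹ *ᵥ g'' ∈ Set.Icc x' xs := by
  have hx'₀ : 0 ≤ x' := hx.trans hx'_mem.1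
  refine ⟨hJy.le_inv_mulVec ?_, hJy.inv_mulVec_le ?_⟩
  · calc J N b₁ y *ᵥ x' = J N b₁ x *ᵥ x' - b₁ x' (y - x) := J_mulVec_eq_sub x y x'
      _ ≤ J N b₁ x *ᵥ x' := sub_le_self _ (hb₁ _ _ hx'₀ (sub_nonneg.mpr hy₁))
      _ = g a P b₂ x := hJx_x'
      _ ≤ g'' := hg''₁
  · calc g'' ≤ g a P b₂ x' := hg''₂
      _ ≤ g a P b₂ xs := g_mono hP hb₂ hx'₀ hx'_mem.2
      _ ≤ J N b₁ y *ᵥ xs := g_le_J_mulVec_solution hM hb hb₁ hxs hxs₀ (hy₂.trans hx'_mem.2)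

lemma J_inv_mulVec_mem_Icc_of_eq_solution (hM : M = N - P) (hb : b = b₁ + b₂)
    (hP : ∀ i j, 0 ≤ P i j) (hb₂ : ∀ u v, 0 ≤ u → 0 ≤ v → 0 ≤ b₂ u v)
    {x' y xs g'' : Fin n → ℝ} (hxs : M *ᵥ xs = a + b xs xs) (hxs₀ : 0 ≤ xs)
    (hx' : x' = (J N b₁ xs)⁻¹ *ᵥ g a P b₂ xs) (hy₁ : xs ≤ y) (hy₂ : y ≤ x')
    (hg''₁ : g a P b₂ xs ≤ g'') (hg''₂ : g'' ≤ g a P b₂ x') :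
    (J N b₁ y)⁻¹ *ᵥ g'' ∈ Set.Icc x' xs := by
  have hx'_le : x' ≤ xs := by
    rw [hx', ← J_mulVec_self_eq_g hM hb hxs]
    exact inv_mulVec_mulVec_le hxs₀
  obtain rfl : y = xs := le_antisymm (hy₂.trans hx'_le) hy₁
  obtain rfl : g'' = g a P b₂ y :=
    le_antisymm (hg''₂.trans (g_mono hP hb₂ (hxs₀.trans hy₂) hx'_le)) hg''₁
  exact ⟨hx'.le, hx' ▸ hx'_le⟩

end QVE

theorem qve_gauss_seidel_update_general {n : ℕ}
    (M : Matrix (Fin n) (Fin n) ℝ)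
    (a : Fin n → ℝ)
    (b b₁ b₂ : (Fin n → ℝ) →ₗ[ℝ] (Fin n → ℝ) →ₗ[ℝ] (Fin n → ℝ))
    (hb : ∀ x y : Fin n → ℝ, 0 ≤ x → 0 ≤ y → 0 ≤ b x y)
    (hb₁ : ∀ x y : Fin n → ℝ, 0 ≤ x → 0 ≤ y → 0 ≤ b₁ x y)
    (hb₂ : ∀ x y : Fin n → ℝ, 0 ≤ x → 0 ≤ y → 0 ≤ b₂ x y)
    (hbsplit : b = b₁ + b₂)
    (N P : Matrix (Fin n) (Fin n) ℝ) (hN : IsMMat N) (hP : ∀ i j, 0 ≤ P i j)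
    (hMsplit : M = N - P)
    (xs : Fin n → ℝ) (hxs_nonneg : 0 ≤ xs) (hxs_sol : M *ᵥ xs = a + b xs xs)
    (hxs_pos : ∀ i, 0 < xs i)
    (hnondeg : ∀ x : Fin n → ℝ, 0 ≤ x → x ≤ xs → x ≠ xs →
      IsNsMMat (M - LinearMap.toMatrix' (b x) - LinearMap.toMatrix' (b.flip x)))
    (J : (Fin n → ℝ) → Matrix (Fin n) (Fin n) ℝ)
    (hJ : ∀ x, J x = N - LinearMap.toMatrix' (b₁.flip x))
    (g : (Fin n → ℝ) → Fin n → ℝ)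
    (hg : ∀ x, g x = a + P *ᵥ x + b₂ x x)
    (x x' : Fin n → ℝ) (hx_nonneg : 0 ≤ x) (hx_le : x ≤ xs)
    (hx_F : M *ᵥ x ≤ a + b x x)
    (hx' : x' = (J x)⁻¹ *ᵥ g x)
    (y : Fin n → ℝ) (hy₁ : x ≤ y) (hy₂ : y ≤ x')
    (g'' : Fin n → ℝ) (hg''₁ : g x ≤ g'') (hg''₂ : g'' ≤ g x') :
    x' ≤ (J y)⁻¹ *ᵥ g'' ∧ (J y)⁻¹ *ᵥ g'' ≤ xs := by
  obtain rfl : J = QVE.J N b₁ := funext hJ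
  obtain rfl : g = QVE.g a P b₂ := funext hg
  rcases eq_or_ne x xs with rfl | hx_ne
  · exact QVE.J_inv_mulVec_mem_Icc_of_eq_solution hMsplit hbsplit hP hb₂ hxs_sol hxs_nonneg hx'
      hy₁ hy₂ hg''₁ hg''₂
  have hJ_mono {z : Fin n → ℝ} (hz : 0 ≤ z) (hz_le : z ≤ xs) (hz_ne : z ≠ xs) :
      IsMonotoneMatrix (QVE.J N b₁ z) :=
    QVE.isMonotoneMatrix_J hMsplit hbsplit hN hP hb hb₁ hb₂ hz (hnondeg z hz hz_le hz_ne)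
  have hJx := hJ_mono hx_nonneg hx_le hx_ne
  have hx'_mem : x' ∈ Set.Icc x xs := hx' ▸ QVE.J_inv_mulVec_g_mem_Icc hMsplit hbsplit hP hb₁
    hb₂ hJx hxs_sol hxs_nonneg hx_nonneg hx_le hx_F
  have hJx_x' : QVE.J N b₁ x *ᵥ x' = QVE.g a P b₂ x := hx' ▸ hJx.mulVec_inv_mulVec _
  -- `y = x*` forces `x' = x*`, and then `J(x*) = J(x)`
  have hJy : IsMonotoneMatrix (QVE.J N b₁ y) := by
    rcases eq_or_ne y xs with rfl | hy_ne
    · rw [le_antisymm hx'_mem.2 hy₂] at hJx_x'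
      rwa [QVE.J_eq_of_J_mulVec_eq_g hMsplit hbsplit hP hb₁ hb₂ hxs_sol hxs_pos hx_nonneg hx_le
        hJx_x']
    · exact hJ_mono (hx_nonneg.trans hy₁) (hy₂.trans hx'_mem.2) hy_ne
  exact QVE.J_inv_mulVec_mem_Icc hMsplit hbsplit hP hb₁ hb₂ hJy hxs_sol hxs_nonneg hx_nonneg
    hJx_x' hx'_mem hy₁ hy₂ hg''₁ hg''₂

/-- Gauss–Seidel-type update for the functional iteration of the QVE: if
`0 ≤ x ≤ x*`, `F(x) ≤ 0` and `x' = J(x)⁻¹ g(x)`, then for any `y` with `x ≤ y ≤ x'`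
and any `g''` with `g(x) ≤ g'' ≤ g(x')`, the update `x^GS = J(y)⁻¹ g''` satisfies
`x' ≤ x^GS ≤ x*`. -/
theorem qve_gauss_seidel_update {n : ℕ}
    (M : Matrix (Fin n) (Fin n) ℝ) (hM : IsNsMMat M)
    (a : Fin n → ℝ) (ha : 0 ≤ a)
    (b b₁ b₂ : (Fin n → ℝ) →ₗ[ℝ] (Fin n → ℝ) →ₗ[ℝ] (Fin n → ℝ))
    (hb : ∀ x y : Fin n → ℝ, 0 ≤ x → 0 ≤ y → 0 ≤ b x y)
    (hb₁ : ∀ x y : Fin n → ℝ, 0 ≤ x → 0 ≤ y → 0 ≤ b₁ x y)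
    (hb₂ : ∀ x y : Fin n → ℝ, 0 ≤ x → 0 ≤ y → 0 ≤ b₂ x y)
    (hbsplit : b = b₁ + b₂)
    (N P : Matrix (Fin n) (Fin n) ℝ) (hN : IsMMat N) (hP : ∀ i j, 0 ≤ P i j)
    (hMsplit : M = N - P)
    (xs : Fin n → ℝ) (hxs_nonneg : 0 ≤ xs) (hxs_sol : M *ᵥ xs = a + b xs xs)
    (hxs_min : ∀ s : Fin n → ℝ, 0 ≤ s → M *ᵥ s = a + b s s → xs ≤ s)
    (hxs_pos : ∀ i, 0 < xs i)
    (hnondeg : ∀ x : Fin n → ℝ, 0 ≤ x → x ≤ xs → x ≠ xs →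
      IsNsMMat (M - LinearMap.toMatrix' (b x) - LinearMap.toMatrix' (b.flip x)))
    (J : (Fin n → ℝ) → Matrix (Fin n) (Fin n) ℝ)
    (hJ : ∀ x, J x = N - LinearMap.toMatrix' (b₁.flip x))
    (g : (Fin n → ℝ) → Fin n → ℝ)
    (hg : ∀ x, g x = a + P *ᵥ x + b₂ x x)
    (x x' : Fin n → ℝ) (hx_nonneg : 0 ≤ x) (hx_le : x ≤ xs)
    (hx_F : M *ᵥ x ≤ a + b x x)
    (hx' : x' = (J x)⁻¹ *ᵥ g x)
    (y : Fin n → ℝ) (hy₁ : x ≤ y) (hy₂ : y ≤ x')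
    (g'' : Fin n → ℝ) (hg''₁ : g x ≤ g'') (hg''₂ : g'' ≤ g x') :
    x' ≤ (J y)⁻¹ *ᵥ g'' ∧ (J y)⁻¹ *ᵥ g'' ≤ xs :=
  qve_gauss_seidel_update_general M a b b₁ b₂ hb hb₁ hb₂ hbsplit N P hN hP hMsplit xs hxs_nonneg
    hxs_sol hxs_pos hnondeg J hJ g hg x x' hx_nonneg hx_le hx_F hx' y hy₁ hy₂ g'' hg''₁ hg''₂
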